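/- Let A = (Q, Σ, δ, P) be an exact ε-machine with steady state distribution π. Then for each L ≥ 1, Σ_{p ∈ Q} π_p · MaxR^L_p ≤ P_π(NSYN_L) ≤ Σ_{p ∈ Q} π_p · R^L_p. -/

import Mathlib

open scoped BigOperators ENNReal

attribute [local instance] Classical.propDecidable

variable {Q A : Type*}

/-- Extension of a partial transition function to words. -/
def stepWord (δ : Q → A → Option Q) : Q → List A → Option Q
  | q, [] => some q
  | q, a :: w => (δ q a).bind fun q' => stepWord δ q' w

/-- Probability of generating a word from a given state. -/
noncomputable def probWord (P : Q → A → ℝ) (δ : Q → A → Option Q) : Q → List A → ℝ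
  | _, [] => 1
  | p, a :: w => P p a * ((δ p a).elim 0 fun p' => probWord P δ p' w)

/-- `w` is a reset word: the set of defined images of all states under `w` is a singleton. -/
def IsResetWord (δ : Q → A → Option Q) (w : List A) : Prop :=
  ∃ r : Q, (∃ q : Q, stepWord δ q w = some r) ∧ ∀ q s : Q, stepWord δ q w = some s → s = r

/-- `w` merges the pair `{p, q}` : the set of defined images of `p` and `q` under `w`
is a singleton. -/
def MergedBy (δ : Q → A → Option Q) (p q : Q) (w : List A) : Prop :=
  ∃ r : Q, (stepWord δ p w = some r ∨ stepWord δ q w = some r) ∧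
    (∀ s : Q, stepWord δ p w = some s → s = r) ∧ ∀ s : Q, stepWord δ q w = some s → s = r

/-- A deadlock pair : a pair of distinct states that no word merges. -/
def IsDeadlockPair (δ : Q → A → Option Q) (p q : Q) : Prop :=
  p ≠ q ∧ ∀ w : List A, ¬ MergedBy δ p q w

/-- An ε-machine. -/
structure EpsMachine (Q A : Type*) [Fintype Q] [Fintype A] : Type _ where
  δ : Q → A → Option Q
  P : Q → A → ℝ
  nonneg : ∀ q a, 0 ≤ P q a
  sum_one : ∀ q : Q, ∑ a : A, P q a = 1
  zero_iff : ∀ q a, P q a = 0 ↔ δ q a = none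
  strong_conn : ∀ p q : Q, ∃ w : List A, stepWord δ p w = some q
  card_alpha : 1 < Fintype.card A
  nonequiv : ∀ p q : Q, p ≠ q → ∃ u : List A, probWord P δ p u ≠ probWord P δ q u

/-- An ε-machine is exact if it admits a reset word. -/
def IsExact [Fintype Q] [Fintype A] (M : EpsMachine Q A) : Prop :=
  ∃ w : List A, IsResetWord M.δ w

/-- Transition function of the pair semi-machine `A₂`. -/
noncomputable def pairStep (δ : Q → A → Option Q) (pq : Q × Q) (a : A) : Option (Q × Q) :=
  match δ pq.1 a, δ pq.2 a with
  | some p', some q' => if p' = q' then none else some (p', q')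
  | _, _ => none

/-- Weights of the pair semi-machine `A₂`. -/
noncomputable def pairP (δ : Q → A → Option Q) (P : Q → A → ℝ) (pq : Q × Q) (a : A) : ℝ :=
  if pairStep δ pq a = none then 0 else P pq.1 a

/-- The states of the pair semi-machine : ordered pairs of distinct states. -/
abbrev PairState (Q : Type*) := {pq : Q × Q // pq.1 ≠ pq.2}

variable [Fintype Q] [Fintype A]

/-- The transition probability matrix `T(A₂)` of the pair semi-machine. -/
noncomputable def pairMatrix (δ : Q → A → Option Q) (P : Q → A → ℝ) :
    Matrix (PairState Q) (PairState Q) ℝ :=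
  fun s t => ∑ a : A, if pairStep δ s.val a = some t.val then P s.val.1 a else 0

/-- `R^L_{p,q}` : the sum of the `(p,q)`-th row entries of `T(A₂)^L`. -/
noncomputable def RLrow (δ : Q → A → Option Q) (P : Q → A → ℝ) (L : ℕ) (s : PairState Q) : ℝ :=
  ∑ t : PairState Q, (pairMatrix δ P ^ L) s t

/-- `R^L_p = ∑_{q ≠ p} R^L_{p,q}`. -/
noncomputable def RLp (δ : Q → A → Option Q) (P : Q → A → ℝ) (L : ℕ) (p : Q) : ℝ :=
  ∑ q : Q, if h : p = q then 0 else RLrow δ P L ⟨(p, q), h⟩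

/-- `MaxR^L_p = max_{q ≠ p} R^L_{p,q}`. -/
noncomputable def MaxRLp (δ : Q → A → Option Q) (P : Q → A → ℝ) (L : ℕ) (p : Q) : ℝ :=
  sSup {x : ℝ | ∃ (q : Q) (h : p ≠ q), x = RLrow δ P L ⟨(p, q), h⟩}

/-- `π` is a positive stationary (steady state) probability distribution of the Markov chain
on the machine states with transition probabilities `P(p → q) = ∑_{x : p.x = q} P_p(x)`. -/
def IsStationaryDist (δ : Q → A → Option Q) (P : Q → A → ℝ) (π : Q → ℝ) : Prop :=
  (∀ q, 0 < π q) ∧ (∑ q : Q, π q = 1) ∧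
    ∀ q : Q, π q = ∑ p : Q, π p * ∑ a : A, if δ p a = some q then P p a else 0

/-- `P_π(w) = ∑_q π_q P_q(w)`. -/
noncomputable def Ppi (δ : Q → A → Option Q) (P : Q → A → ℝ) (π : Q → ℝ) (w : List A) : ℝ :=
  ∑ q : Q, π q * probWord P δ q w

/-- `P_π(NSYN_L)` : the probability of generating a non-reset word of length `L`. -/
noncomputable def nsynProb (δ : Q → A → Option Q) (P : Q → A → ℝ) (π : Q → ℝ) (L : ℕ) : ℝ :=
  ∑ w : Fin L → A, if IsResetWord δ (List.ofFn w) then 0 else Ppi δ P π (List.ofFn w)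

/-- The maximum row sum (the `‖·‖₁` norm of a nonnegative matrix). -/
noncomputable def maxRowSum {n : Type*} [Fintype n] (T : Matrix n n ℝ) : ℝ :=
  sSup {x : ℝ | ∃ s : n, x = ∑ t : n, T s t}

/-- The belief distribution `φ(w)` of the observer after the machine generated `w`. -/
noncomputable def belief (δ : Q → A → Option Q) (P : Q → A → ℝ) (π : Q → ℝ)
    (w : List A) (q : Q) : ℝ :=
  (∑ p : Q, if stepWord δ p w = some q then π p * probWord P δ p w else 0) / Ppi δ P π w

/-- `Q_L(w) = 1 - max_q φ(w)_q` : the combined probability of all states other than the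
most likely one. -/
noncomputable def QLw (δ : Q → A → Option Q) (P : Q → A → ℝ) (π : Q → ℝ) (w : List A) : ℝ :=
  1 - sSup (Set.range (belief δ P π w))

/-- `P(Q_L > b^L)`. -/
noncomputable def probQLgt (δ : Q → A → Option Q) (P : Q → A → ℝ) (π : Q → ℝ)
    (b : ℝ) (L : ℕ) : ℝ :=
  ∑ w : Fin L → A, if b ^ L < QLw δ P π (List.ofFn w) then Ppi δ P π (List.ofFn w) else 0

/-- The prediction rate constant `prc(A)` : the infimum of all `a > 0` such that
`P(Q_L > a^L) → 0` as `L → ∞`. -/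
noncomputable def prc (δ : Q → A → Option Q) (P : Q → A → ℝ) (π : Q → ℝ) : ℝ :=
  sInf {a : ℝ | 0 < a ∧
    Filter.Tendsto (fun L : ℕ => probQLgt δ P π a L) Filter.atTop (nhds 0)}

/-- `E(Q_L^{1/L})`. -/
noncomputable def EQL (δ : Q → A → Option Q) (P : Q → A → ℝ) (π : Q → ℝ) (L : ℕ) : ℝ :=
  ∑ w : Fin L → A, Ppi δ P π (List.ofFn w) * QLw δ P π (List.ofFn w) ^ ((L : ℝ)⁻¹)

/-- `E(1/Q_L^{1/L})`, computed in the extended reals (with `1/0 = ∞`). -/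
noncomputable def EinvQL (δ : Q → A → Option Q) (P : Q → A → ℝ) (π : Q → ℝ) (L : ℕ) : ℝ≥0∞ :=
  ∑ w : Fin L → A, ENNReal.ofReal (Ppi δ P π (List.ofFn w)) *
    (ENNReal.ofReal (QLw δ P π (List.ofFn w)))⁻¹ ^ ((L : ℝ)⁻¹)

/-- A deadlock component : a nonempty, strongly connected set of deadlock pairs closed
under the action of all letters. -/
def IsDeadlockComponent (δ : Q → A → Option Q) (S : Set (Q × Q)) : Prop :=
  S.Nonempty ∧ (∀ pq ∈ S, IsDeadlockPair δ pq.1 pq.2) ∧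
    (∀ pq ∈ S, ∀ a : A, ∀ r : Q × Q, pairStep δ pq a = some r → r ∈ S) ∧
    ∀ pq ∈ S, ∀ rs ∈ S, ∃ w : List A, stepWord (pairStep δ) pq w = some rs

/-- The states of the edge machine `M_edge` of a component `S` of the pair semi-machine :
pairs `(x, k)` with `k ∈ S` and `P_k(x) > 0`. -/
abbrev EdgeState (δ : Q → A → Option Q) (P : Q → A → ℝ) (S : Set (Q × Q)) :=
  {e : A × (Q × Q) // e.2 ∈ S ∧ 0 < pairP δ P e.2 e.1}

/-- `ρ` is a stationary (equilibrium) distribution of the edge machine `M_edge`,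
whose transition probabilities are `P((x,k) → (y,j)) = P_j(y)·I(x,k,j)`. -/
def IsEdgeStationary (δ : Q → A → Option Q) (P : Q → A → ℝ) (S : Set (Q × Q))
    (ρ : EdgeState δ P S → ℝ) : Prop :=
  (∀ r, 0 ≤ ρ r) ∧ (∑ r : EdgeState δ P S, ρ r = 1) ∧
    ∀ t : EdgeState δ P S, ρ t = ∑ s : EdgeState δ P S, ρ s *
      (if pairStep δ s.val.2 s.val.1 = some t.val.2 then pairP δ P t.val.2 t.val.1 else 0)

/-- `E_M = ∑_r ρ_r F(r)` where `F((x,(p,q))) = ln (P_p(x) / P_q(x))`. -/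
noncomputable def EMval (δ : Q → A → Option Q) (P : Q → A → ℝ) (S : Set (Q × Q))
    (ρ : EdgeState δ P S → ℝ) : ℝ :=
  ∑ r : EdgeState δ P S, ρ r * Real.log (P r.val.2.1 r.val.1 / P r.val.2.2 r.val.1)

/-! Both bounds hold word by word and state by state. The entries of `T(A₂)^L` are path sums, so
`R^L_{p,q}` is the total `P_p`-weight of the words `w` of length `L` along which `p` and `q` stay
defined and never merge, i.e. for which `p.w` and `q.w` are distinct defined states. Such a `w`
is not a reset word, whence `R^L_{p,q} ≤ P_p(NSYN_L)`. Conversely, if `w` is not a reset word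
and `P_p(w) > 0`, then `p.w` is defined and some `q.w` is defined and different from it, so `w`
is counted in some `R^L_{p,q}`, whence `P_p(NSYN_L) ≤ R^L_p`. Averaging over `π ≥ 0` gives the
theorem. -/

section WeightedAutomaton

variable {S X : Type*} (δ : S → X → Option S) (P : S → X → ℝ)

lemma probWord_nonneg (hP : ∀ s a, 0 ≤ P s a) : ∀ (s : S) (w : List X), 0 ≤ probWord P δ s w
  | _, [] => zero_le_one
  | s, a :: w => mul_nonneg (hP s a) <| by
      cases δ s a with
      | none => exact le_rfl
      | some t => exact probWord_nonneg hP t w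

lemma isSome_stepWord_of_probWord_ne_zero :
    ∀ {s : S} {w : List X}, probWord P δ s w ≠ 0 → (stepWord δ s w).isSome
  | _, [], _ => rfl
  | s, a :: w, h => by
    cases hs : δ s a with
    | none => simp [probWord, hs] at h
    | some t =>
      simp only [probWord, hs, Option.elim_some, ne_eq, mul_eq_zero, not_or] at h
      simpa [stepWord, hs] using isSome_stepWord_of_probWord_ne_zero h.2

lemma sum_fin_succ_ofFn {M : Type*} [AddCommMonoid M] [Fintype X] (L : ℕ) (F : List X → M) :
    ∑ w : Fin (L + 1) → X, F (List.ofFn w) = ∑ a : X, ∑ w : Fin L → X, F (a :: List.ofFn w) := by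
  rw [← Fintype.sum_prod_type', ← (Fin.consEquiv fun _ => X).sum_comp]
  simp [List.ofFn_succ]

noncomputable def transMatrix [Fintype X] : Matrix S S ℝ :=
  Matrix.of fun s t => ∑ a : X, if δ s a = some t then P s a else 0

lemma sum_transMatrix_pow_apply [Fintype S] [DecidableEq S] [Fintype X] (L : ℕ) (s : S) :
    ∑ t, (transMatrix δ P ^ L) s t =
      ∑ w : Fin L → X, if (stepWord δ s (List.ofFn w)).isSome then
        probWord P δ s (List.ofFn w) else 0 := by
  induction L generalizing s with
  | zero => simp [Matrix.one_apply, stepWord, probWord]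
  | succ L ih =>
    have hrow : ∑ t, (transMatrix δ P ^ (L + 1)) s t =
        ∑ u, transMatrix δ P s u * ∑ t, (transMatrix δ P ^ L) u t := by
      simp only [pow_succ', Matrix.mul_apply, Finset.mul_sum]
      exact Finset.sum_comm
    rw [hrow, sum_fin_succ_ofFn L fun w => if (stepWord δ s w).isSome then probWord P δ s w else 0]
    simp only [ih]
    simp only [transMatrix, Matrix.of_apply, Finset.sum_mul]
    rw [Finset.sum_comm]
    refine Finset.sum_congr rfl fun a _ => ?_
    cases hs : δ s a with
    | none => simp [stepWord, hs]
    | some t =>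
      simp only [Option.some_inj, ite_mul, zero_mul, Finset.sum_ite_eq, Finset.mem_univ, if_true]
      simp [stepWord, probWord, hs, Finset.mul_sum]

end WeightedAutomaton

section PairMachine

variable {S X : Type*} (δ : S → X → Option S)

lemma pairStep_eq_some_iff {pq r : S × S} {a : X} :
    pairStep δ pq a = some r ↔ δ pq.1 a = some r.1 ∧ δ pq.2 a = some r.2 ∧ r.1 ≠ r.2 := by
  unfold pairStep
  rcases δ pq.1 a with _ | p <;> rcases δ pq.2 a with _ | q <;> simp only [reduceCtorEq,
    false_and, and_false]
  split_ifs with h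
  · simp only [h, false_iff, not_and, not_not, Option.some_inj]
    exact fun h1 h2 => h1.symm.trans h2
  · aesop

/-- `pairStep` as a partial transition function on `PairState S`, the index type of `T(A₂)`. -/
noncomputable def pairStateStep (s : PairState S) (a : X) : Option (PairState S) :=
  match δ s.1.1 a, δ s.1.2 a with
  | some p, some q => if h : p = q then none else some ⟨(p, q), h⟩
  | _, _ => none

lemma pairStateStep_eq_some_iff {s t : PairState S} {a : X} :
    pairStateStep δ s a = some t ↔ δ s.1.1 a = some t.1.1 ∧ δ s.1.2 a = some t.1.2 := by
  obtain ⟨⟨t₁, t₂⟩, ht⟩ := t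
  unfold pairStateStep
  rcases δ s.1.1 a with _ | p <;> rcases δ s.1.2 a with _ | q <;> simp only [reduceCtorEq,
    false_and, and_false]
  split_ifs with h
  · simp only [h, false_iff, not_and, Option.some_inj]
    exact fun h1 h2 => ht (h1.symm.trans h2)
  · simp [Subtype.ext_iff]

lemma stepWord_pairStateStep_eq_some_iff :
    ∀ {s t : PairState S} {w : List X}, stepWord (pairStateStep δ) s w = some t ↔
      stepWord δ s.1.1 w = some t.1.1 ∧ stepWord δ s.1.2 w = some t.1.2
  | s, t, [] => by simp [stepWord, Subtype.ext_iff, Prod.ext_iff]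
  | ⟨(p, q), hpq⟩, t, a :: w => by
    simp only [stepWord]
    cases hp : δ p a with
    | none => simp [pairStateStep, hp]
    | some p' =>
      cases hq : δ q a with
      | none => simp [pairStateStep, hp, hq]
      | some q' =>
        by_cases h : p' = q'
        · subst h
          simp only [pairStateStep, hp, hq, dif_pos, Option.bind_none, Option.bind_some,
            reduceCtorEq, false_iff, not_and]
          exact fun h1 h2 => t.2 (Option.some_inj.1 (h1.symm.trans h2))
        · simp only [pairStateStep, hp, hq, dif_neg h, Option.bind_some]
          exact stepWord_pairStateStep_eq_some_iff

lemma probWord_pairStateStep (P : S → X → ℝ) :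
    ∀ {s : PairState S} {w : List X}, (stepWord (pairStateStep δ) s w).isSome →
      probWord (fun s a => P s.1.1 a) (pairStateStep δ) s w = probWord P δ s.1.1 w
  | _, [], _ => rfl
  | s, a :: w, h => by
    cases hs : pairStateStep δ s a with
    | none => simp [stepWord, hs] at h
    | some t =>
      simp only [stepWord, hs, Option.bind_some] at h
      simp only [probWord, hs, (pairStateStep_eq_some_iff δ).1 hs, Option.elim_some,
        probWord_pairStateStep P h]

lemma pairMatrix_eq_transMatrix [Fintype S] [Fintype X] (P : S → X → ℝ) :
    pairMatrix δ P = transMatrix (pairStateStep δ) fun s a => P s.1.1 a := by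
  ext s t
  simp only [pairMatrix, transMatrix, Matrix.of_apply, pairStep_eq_some_iff,
    pairStateStep_eq_some_iff, t.2, ne_eq, not_false_eq_true, and_true]

lemma RLrow_eq_sum [Fintype S] [Fintype X] (P : S → X → ℝ) (L : ℕ) (s : PairState S) :
    RLrow δ P L s = ∑ w : Fin L → X, if (stepWord (pairStateStep δ) s (List.ofFn w)).isSome then
      probWord P δ s.1.1 (List.ofFn w) else 0 := by
  rw [RLrow, pairMatrix_eq_transMatrix, sum_transMatrix_pow_apply]
  refine Finset.sum_congr rfl fun w _ => ?_
  split_ifs with h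
  exacts [probWord_pairStateStep δ P h, rfl]

lemma not_isResetWord_of_isSome_stepWord_pairStateStep {s : PairState S} {w : List X}
    (h : (stepWord (pairStateStep δ) s w).isSome) : ¬ IsResetWord δ w := by
  obtain ⟨t, ht⟩ := Option.isSome_iff_exists.1 h
  obtain ⟨h₁, h₂⟩ := (stepWord_pairStateStep_eq_some_iff δ).1 ht
  rintro ⟨r, -, hr⟩
  exact t.2 ((hr _ _ h₁).trans (hr _ _ h₂).symm)

lemma exists_isSome_stepWord_pairStateStep {p : S} {w : List X} (hw : ¬ IsResetWord δ w)
    (hp : (stepWord δ p w).isSome) :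
    ∃ (q : S) (h : p ≠ q), (stepWord (pairStateStep δ) ⟨(p, q), h⟩ w).isSome := by
  obtain ⟨r, hr⟩ := Option.isSome_iff_exists.1 hp
  obtain ⟨q, r', hq, hr'⟩ : ∃ q r', stepWord δ q w = some r' ∧ r' ≠ r := by
    by_contra! hall
    exact hw ⟨r, ⟨p, hr⟩, hall⟩
  have hpq : p ≠ q := by
    rintro rfl
    exact hr' (Option.some_inj.1 (hq.symm.trans hr))
  refine ⟨q, hpq, Option.isSome_iff_exists.2 ⟨⟨(r, r'), hr'.symm⟩, ?_⟩⟩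
  exact (stepWord_pairStateStep_eq_some_iff δ).2 ⟨hr, hq⟩

end PairMachine

section NonSynchronizing

variable {S X : Type*} [Fintype S] [Fintype X] (δ : S → X → Option S) (P : S → X → ℝ)

/-- `P_p(NSYN_L)`: the probability of generating a non-reset word of length `L` from `p`. -/
noncomputable def nsynProbFrom (L : ℕ) (p : S) : ℝ :=
  ∑ w : Fin L → X, if IsResetWord δ (List.ofFn w) then 0 else probWord P δ p (List.ofFn w)

lemma nsynProb_eq_sum (π : S → ℝ) (L : ℕ) :
    nsynProb δ P π L = ∑ p, π p * nsynProbFrom δ P L p := by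
  simp only [nsynProb, Ppi, nsynProbFrom, Finset.mul_sum]
  rw [Finset.sum_comm]
  refine Finset.sum_congr rfl fun w _ => ?_
  split_ifs <;> simp

variable {P}

lemma RLrow_le_nsynProbFrom (hP : ∀ s a, 0 ≤ P s a) (L : ℕ) {p q : S} (h : p ≠ q) :
    RLrow δ P L ⟨(p, q), h⟩ ≤ nsynProbFrom δ P L p := by
  rw [RLrow_eq_sum]
  refine Finset.sum_le_sum fun w _ => ?_
  split_ifs with hsep hreset
  · exact absurd hreset (not_isResetWord_of_isSome_stepWord_pairStateStep δ hsep)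
  · exact le_rfl
  · exact le_rfl
  · exact probWord_nonneg δ P hP p _

lemma MaxRLp_le_nsynProbFrom (hP : ∀ s a, 0 ≤ P s a) (L : ℕ) (p : S) :
    MaxRLp δ P L p ≤ nsynProbFrom δ P L p := by
  refine Real.sSup_le ?_ ?_
  · rintro x ⟨q, h, rfl⟩
    exact RLrow_le_nsynProbFrom δ hP L h
  · -- the case `sSup ∅ = 0`, when `S` is a singleton
    refine Finset.sum_nonneg fun w _ => ?_
    split_ifs
    exacts [le_rfl, probWord_nonneg δ P hP p _]

lemma nsynProbFrom_le_RLp (hP : ∀ s a, 0 ≤ P s a) (L : ℕ) (p : S) :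
    nsynProbFrom δ P L p ≤ RLp δ P L p := by
  set sepProb : List X → S → ℝ := fun w q => if h : p = q then 0 else
    if (stepWord (pairStateStep δ) ⟨(p, q), h⟩ w).isSome then probWord P δ p w else 0
  have hsep_nonneg : ∀ w q, 0 ≤ sepProb w q := fun w q => by
    simp only [sepProb]
    split_ifs
    exacts [le_rfl, probWord_nonneg δ P hP p w, le_rfl]
  have hRLp : RLp δ P L p = ∑ w : Fin L → X, ∑ q, sepProb (List.ofFn w) q := by
    rw [RLp, Finset.sum_comm]
    refine Finset.sum_congr rfl fun q _ => ?_
    by_cases h : p = q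
    · simp [sepProb, h]
    · simp [sepProb, h, RLrow_eq_sum]
  rw [hRLp]
  refine Finset.sum_le_sum fun w _ => ?_
  split_ifs with hreset
  · exact Finset.sum_nonneg fun q _ => hsep_nonneg _ q
  by_cases h0 : probWord P δ p (List.ofFn w) = 0
  · exact h0 ▸ Finset.sum_nonneg fun q _ => hsep_nonneg _ q
  obtain ⟨q, hpq, hsep⟩ := exists_isSome_stepWord_pairStateStep δ hreset
    (isSome_stepWord_of_probWord_ne_zero δ P h0)
  calc probWord P δ p (List.ofFn w) = sepProb (List.ofFn w) q := by simp [sepProb, hpq, hsep]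
    _ ≤ ∑ q, sepProb (List.ofFn w) q :=
      Finset.single_le_sum (fun q _ => hsep_nonneg _ q) (Finset.mem_univ q)

end NonSynchronizing

theorem stmt1_general {Q A : Type*} [Fintype Q] [Fintype A] (M : EpsMachine Q A)
    (π : Q → ℝ) (hπ : IsStationaryDist M.δ M.P π) (L : ℕ) :
    (∑ p : Q, π p * MaxRLp M.δ M.P L p) ≤ nsynProb M.δ M.P π L ∧
      nsynProb M.δ M.P π L ≤ ∑ p : Q, π p * RLp M.δ M.P L p := by
  have hπ₀ : ∀ p, 0 ≤ π p := fun p => (hπ.1 p).le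
  rw [nsynProb_eq_sum]
  exact ⟨Finset.sum_le_sum fun p _ => mul_le_mul_of_nonneg_left
      (MaxRLp_le_nsynProbFrom M.δ M.nonneg L p) (hπ₀ p),
    Finset.sum_le_sum fun p _ => mul_le_mul_of_nonneg_left
      (nsynProbFrom_le_RLp M.δ M.nonneg L p) (hπ₀ p)⟩

/-- Corollary 1: for an exact ε-machine with steady state distribution `π`
and each `L ≥ 1`, `∑_p π_p MaxR^L_p ≤ P_π(NSYN_L) ≤ ∑_p π_p R^L_p`. -/
theorem stmt1 {Q A : Type*} [Fintype Q] [Fintype A] (M : EpsMachine Q A)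
    (hexact : IsExact M) (π : Q → ℝ) (hπ : IsStationaryDist M.δ M.P π) (L : ℕ) (hL : 1 ≤ L) :
    (∑ p : Q, π p * MaxRLp M.δ M.P L p) ≤ nsynProb M.δ M.P π L ∧
      nsynProb M.δ M.P π L ≤ ∑ p : Q, π p * RLp M.δ M.P L p :=
  stmt1_general M π hπ L
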